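/- arXiv:2505.23649 — 4 statements merged into one kernel-verified Lean document; each statement's English description precedes it below -/
import Mathlib

section
/- For every real γ > 0 there exists a constant C > 0 such that the following holds for all n ≥ 2. Let v₀ : Fin n → ℕ be any initial assignment of values and define v_k(X_k.2) = max(v_{k−1}(X_k.1), v_{k−1}(X_k.2)) and v_k(a) = v_{k−1}(a) for all other agents a. Let T = inf{k : ∀ a ∈ Fin n, v_k(a) = max_{b} v₀(b)} be the number of interactions until every agent holds the maximum initial value. Then P(T > C · n · log n) ≤ n^{−γ}, where log denotes the natural logarithm. -/
/-!
When `s` agents hold the maximum, an interaction informs a new one with probability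
`p_s = s(n-s)/(n(n-1))`. The potential `G(s) = ∏_{t=s}^{n-1} (1 - 1/(2n p_t))⁻¹` satisfies
`p_s G(s+1) + (1 - p_s) G(s) = (1 - 1/(2n)) G(s)`, so the expectation of `G - 1` along the process
decays like `(1 - 1/(2n))^k`; the informed set after `k` interactions is independent of the next
one, which is what makes this one-step computation legitimate. Before stabilisation `G - 1 ≥ 1`,
and harmonic sums give `G(1) ≤ e² n²`, so Markov's inequality yields
`P(T > k) ≤ e² n² e^{-k/(2n)}`, which is at most `n^{-γ}` once `k ≥ (2γ + 12) n log n`.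
-/

open MeasureTheory ProbabilityTheory Finset

section RandomDynamicalSystem

variable {Ω σ α : Type*} {F : σ → α → σ} {z₀ : σ} {Y : ℕ → Ω → α}

def trajectory (F : σ → α → σ) (z₀ : σ) (Y : ℕ → Ω → α) : ℕ → Ω → σ
  | 0, _ => z₀
  | k + 1, ω => F (trajectory F z₀ Y k ω) (Y k ω)

theorem trajectory_invariant {P : σ → Prop} (hP₀ : P z₀) (hPF : ∀ z x, P z → P (F z x))
    (k : ℕ) (ω : Ω) : P (trajectory F z₀ Y k ω) := by
  induction k with
  | zero => exact hP₀
  | succ k ih => exact hPF _ _ ih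

variable [MeasurableSpace σ] [mα : MeasurableSpace α]

theorem measurable_trajectory_past (hF : Measurable (Function.uncurry F)) (k : ℕ) :
    Measurable[⨆ i ∈ Set.Iio k, mα.comap (Y i)] (trajectory F z₀ Y k) := by
  induction k with
  | zero => exact measurable_const
  | succ k ih =>
    have hpast :
        ⨆ i ∈ Set.Iio k, mα.comap (Y i) ≤ ⨆ i ∈ Set.Iio (k + 1), mα.comap (Y i) :=
      biSup_mono fun i hi => Nat.lt_succ_of_lt hi
    have hnow : mα.comap (Y k) ≤ ⨆ i ∈ Set.Iio (k + 1), mα.comap (Y i) :=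
      le_biSup (fun i => mα.comap (Y i)) (Nat.lt_succ_self k)
    exact hF.comp ((ih.mono hpast le_rfl).prodMk
      ((comap_measurable (Y k)).mono hnow le_rfl))

variable [MeasurableSpace Ω] {μ : Measure Ω}

theorem measurable_trajectory (hF : Measurable (Function.uncurry F)) (hY : ∀ i, Measurable (Y i))
    (k : ℕ) : Measurable (trajectory F z₀ Y k) :=
  (measurable_trajectory_past hF k).mono (iSup₂_le fun i _ => (hY i).comap_le) le_rfl

theorem indepFun_trajectory (hF : Measurable (Function.uncurry F)) (hY : ∀ i, Measurable (Y i))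
    (hind : iIndepFun Y μ) (k : ℕ) : IndepFun (trajectory F z₀ Y k) (Y k) μ := by
  rw [IndepFun_iff_Indep]
  have h := indep_iSup_of_disjoint (fun i => (hY i).comap_le) hind.iIndep
    (Set.disjoint_singleton_right.2 (lt_irrefl k) : Disjoint (Set.Iio k) {k})
  rw [_root_.iSup_singleton] at h
  exact indep_of_indep_of_le_left h (measurable_trajectory_past hF k).comap_le

theorem lintegral_trajectory_succ [IsFiniteMeasure μ] (hF : Measurable (Function.uncurry F))
    (hY : ∀ i, Measurable (Y i)) (hind : iIndepFun Y μ) {Φ : σ → ENNReal}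
    (hΦ : Measurable Φ) (k : ℕ) :
    ∫⁻ ω, Φ (trajectory F z₀ Y (k + 1) ω) ∂μ
      = ∫⁻ ω, ∫⁻ x, Φ (F (trajectory F z₀ Y k ω) x) ∂(μ.map (Y k)) ∂μ := by
  have hZ := measurable_trajectory (z₀ := z₀) hF hY k
  have hG : Measurable (Φ ∘ Function.uncurry F) := hΦ.comp hF
  have hprod := (indepFun_iff_map_prod_eq_prod_map_map hZ.aemeasurable (hY k).aemeasurable).1
    (indepFun_trajectory hF hY hind k)
  calc ∫⁻ ω, Φ (trajectory F z₀ Y (k + 1) ω) ∂μ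
      = ∫⁻ p, Φ (Function.uncurry F p)
          ∂(μ.map fun ω => (trajectory F z₀ Y k ω, Y k ω)) :=
        (lintegral_map hG (hZ.prodMk (hY k))).symm
    _ = ∫⁻ z, ∫⁻ x, Φ (F z x) ∂(μ.map (Y k)) ∂(μ.map (trajectory F z₀ Y k)) := by
        rw [hprod]
        exact lintegral_prod _ hG.aemeasurable
    _ = _ := lintegral_map (hG.lintegral_prod_right') hZ

theorem lintegral_trajectory_le_pow_mul [IsProbabilityMeasure μ]
    (hF : Measurable (Function.uncurry F)) (hY : ∀ i, Measurable (Y i)) (hind : iIndepFun Y μ)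
    {Φ : σ → ENNReal} (hΦ : Measurable Φ)
    {P : σ → Prop} (hP₀ : P z₀) (hPF : ∀ z x, P z → P (F z x)) {r : ENNReal}
    (hdrift : ∀ k z, P z → ∫⁻ x, Φ (F z x) ∂(μ.map (Y k)) ≤ r * Φ z) (k : ℕ) :
    ∫⁻ ω, Φ (trajectory F z₀ Y k ω) ∂μ ≤ r ^ k * Φ z₀ := by
  induction k with
  | zero => simp [trajectory]
  | succ k ih =>
    calc ∫⁻ ω, Φ (trajectory F z₀ Y (k + 1) ω) ∂μ
        = ∫⁻ ω, ∫⁻ x, Φ (F (trajectory F z₀ Y k ω) x) ∂(μ.map (Y k)) ∂μ :=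
          lintegral_trajectory_succ hF hY hind hΦ k
      _ ≤ ∫⁻ ω, r * Φ (trajectory F z₀ Y k ω) ∂μ :=
          lintegral_mono fun ω => hdrift k _ (trajectory_invariant hP₀ hPF k ω)
      _ = r * ∫⁻ ω, Φ (trajectory F z₀ Y k ω) ∂μ :=
          lintegral_const_mul r (hΦ.comp (measurable_trajectory hF hY k))
      _ ≤ r * (r ^ k * Φ z₀) := mul_le_mul_right ih r
      _ = r ^ (k + 1) * Φ z₀ := by rw [pow_succ', mul_assoc]

end RandomDynamicalSystem

section Spread

variable {ι : Type*} [DecidableEq ι]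

def spread (S : Finset ι) (x : ι × ι) : Finset ι :=
  if x.1 ∈ S then insert x.2 S else S

theorem Finset.Nonempty.spread {S : Finset ι} (hS : S.Nonempty) (x : ι × ι) :
    (spread S x).Nonempty := by
  unfold _root_.spread
  split_ifs
  exacts [insert_nonempty _ _, hS]

theorem card_spread_eq_card_add_one {S : Finset ι} {x : ι × ι} (h₁ : x.1 ∈ S)
    (h₂ : x.2 ∉ S) : #(spread S x) = #S + 1 := by
  simp [spread, h₁, card_insert_of_notMem h₂]

theorem card_spread_eq_card {S : Finset ι} {x : ι × ι}
    (h : ¬(x.1 ∈ S ∧ x.2 ∉ S)) : #(spread S x) = #S := by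
  by_cases h₁ : x.1 ∈ S
  · simp [spread, h₁, insert_eq_self.2 (not_not.1 fun h₂ => h ⟨h₁, h₂⟩)]
  · simp [spread, h₁]

variable [Fintype ι]

theorem sum_offDiag_card_spread {M : Type*} [AddCommMonoid M] (S : Finset ι) (f : ℕ → M) :
    ∑ x ∈ (univ : Finset ι).offDiag, f #(spread S x)
      = (#S * #Sᶜ) • f (#S + 1) + (#(univ : Finset ι).offDiag - #S * #Sᶜ) • f #S := by
  set D := (univ : Finset ι).offDiag
  have hgood : D.filter (fun x => x.1 ∈ S ∧ x.2 ∉ S) = S ×ˢ Sᶜ := by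
    ext ⟨a, b⟩
    simp only [D, mem_filter, mem_offDiag, mem_univ, mem_product, mem_compl, true_and]
    constructor
    · exact fun h => h.2
    · rintro ⟨ha, hb⟩
      exact ⟨fun hab => hb (hab ▸ ha), ha, hb⟩
  have hbad : #(D.filter fun x => ¬(x.1 ∈ S ∧ x.2 ∉ S)) = #D - #S * #Sᶜ := by
    rw [← card_product, ← hgood, filter_not, card_sdiff_of_subset (filter_subset _ _)]
  rw [← sum_filter_add_sum_filter_not D (fun x => x.1 ∈ S ∧ x.2 ∉ S),
    sum_congr rfl fun x hx => congrArg f (card_spread_eq_card_add_one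
      (mem_filter.1 hx).2.1 (mem_filter.1 hx).2.2),
    sum_congr rfl fun x hx => congrArg f (card_spread_eq_card (mem_filter.1 hx).2),
    sum_const, sum_const, hgood, card_product, hbad]

end Spread

theorem filter_eq_spread_of_max_update {ι : Type*} [Fintype ι] [DecidableEq ι] {M : ℕ}
    {u u' : ι → ℕ} {x : ι × ι} (hu : ∀ a, u a ≤ M)
    (hu' : ∀ a, u' a = if a = x.2 then max (u x.1) (u x.2) else u a) :
    univ.filter (fun a => u' a = M) = spread (univ.filter fun a => u a = M) x := by
  ext a
  have := hu x.1
  have := hu x.2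
  simp only [spread, mem_filter, mem_univ, true_and, hu']
  split_ifs <;> grind

theorem le_sup_of_max_update {Ω ι : Type*} [Fintype ι] [DecidableEq ι]
    {X : ℕ → Ω → ι × ι} {v₀ : ι → ℕ} {v : ℕ → Ω → ι → ℕ}
    (hv₀ : ∀ ω a, v 0 ω a = v₀ a)
    (hv : ∀ k ω a, v (k + 1) ω a =
      if a = (X (k + 1) ω).2 then max (v k ω (X (k + 1) ω).1) (v k ω (X (k + 1) ω).2)
      else v k ω a)
    (k : ℕ) (ω : Ω) (a : ι) : v k ω a ≤ univ.sup v₀ := by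
  induction k generalizing a with
  | zero => exact hv₀ ω a ▸ le_sup (mem_univ a)
  | succ k ih =>
    rw [hv]
    split_ifs
    exacts [max_le (ih _) (ih _), ih a]

theorem filter_eq_trajectory_spread {Ω ι : Type*} [Fintype ι] [DecidableEq ι]
    {X : ℕ → Ω → ι × ι} {v₀ : ι → ℕ} {v : ℕ → Ω → ι → ℕ}
    (hv₀ : ∀ ω a, v 0 ω a = v₀ a)
    (hv : ∀ k ω a, v (k + 1) ω a =
      if a = (X (k + 1) ω).2 then max (v k ω (X (k + 1) ω).1) (v k ω (X (k + 1) ω).2)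
      else v k ω a)
    (k : ℕ) (ω : Ω) :
    univ.filter (fun a => v k ω a = univ.sup v₀) =
      trajectory spread (univ.filter fun a => v₀ a = univ.sup v₀) (fun k => X (k + 1)) k ω := by
  induction k with
  | zero => simp only [hv₀, trajectory]
  | succ k ih =>
    rw [filter_eq_spread_of_max_update (le_sup_of_max_update hv₀ hv k ω) (hv k ω), ih]
    rfl

theorem sum_Ico_one_inv_le_one_add_log (n : ℕ) :
    ∑ t ∈ Ico 1 n, (t : ℝ)⁻¹ ≤ 1 + Real.log n := by
  rcases Nat.eq_zero_or_pos n with rfl | hn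
  · simp
  have hharm : ∑ t ∈ Ico 1 n, (t : ℝ)⁻¹ = harmonic (n - 1) := by
    rw [harmonic_eq_sum_Icc, ← Ico_add_one_right_eq_Icc,
      Nat.sub_add_cancel (Nat.one_le_iff_ne_zero.2 hn.ne')]
    push_cast
    rfl
  rw [hharm]
  refine (harmonic_le_one_add_log _).trans (add_le_add_right ?_ 1)
  rcases Nat.eq_zero_or_pos (n - 1) with h | h
  · rw [h, Nat.cast_zero, Real.log_zero]
    exact Real.log_natCast_nonneg n
  · exact Real.log_le_log (by exact_mod_cast h) (by exact_mod_cast Nat.sub_le n 1)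

theorem sum_Ico_one_inv_sub_eq (n : ℕ) :
    ∑ t ∈ Ico 1 n, ((n : ℝ) - t)⁻¹ = ∑ t ∈ Ico 1 n, (t : ℝ)⁻¹ := by
  have h := sum_Ico_reflect (fun j : ℕ => (j : ℝ)⁻¹) 1 (Nat.le_succ n)
  rw [Nat.add_sub_cancel_left, Nat.add_sub_cancel] at h
  rw [← h]
  refine sum_congr rfl fun t ht => ?_
  rw [Nat.cast_sub (mem_Ico.1 ht).2.le]

section Potential

/-- `1 - 1 / (2 n p_t)`, where `p_t = t(n-t)/(n(n-1))`. -/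
noncomputable def epidemicFactor (n t : ℕ) : ℝ :=
  1 - ((n : ℝ) - 1) / (2 * t * (n - t))

noncomputable def epidemicPotential (n s : ℕ) : ℝ :=
  (∏ t ∈ Ico s n, epidemicFactor n t)⁻¹

variable {n s t : ℕ}

theorem sub_one_le_mul_sub (h₁ : 1 ≤ t) (h₂ : t < n) : (n : ℝ) - 1 ≤ t * (n - t) := by
  have h₁' : (1 : ℝ) ≤ t := by exact_mod_cast h₁
  have h₂' : (t : ℝ) + 1 ≤ n := by exact_mod_cast h₂
  nlinarith

theorem mul_epidemicFactor (h₁ : 1 ≤ t) (h₂ : t < n) :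
    t * ((n : ℝ) - t) * epidemicFactor n t = t * (n - t) - (n - 1) / 2 := by
  have ht : (t : ℝ) ≠ 0 := by positivity
  have hnt : (n : ℝ) - t ≠ 0 := sub_ne_zero.2 (by exact_mod_cast h₂.ne')
  unfold epidemicFactor
  field_simp

theorem epidemicFactor_mem_Icc (h₁ : 1 ≤ t) (h₂ : t < n) :
    epidemicFactor n t ∈ Set.Icc (1 / 2) 1 := by
  have hle := sub_one_le_mul_sub h₁ h₂
  have h1n : (1 : ℝ) ≤ n - 1 := by
    have : (2 : ℝ) ≤ n := by exact_mod_cast (show 2 ≤ n by omega)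
    linarith
  have hpos : (0 : ℝ) < 2 * t * (n - t) := by linarith
  have hx₀ : 0 ≤ ((n : ℝ) - 1) / (2 * t * (n - t)) := div_nonneg (by linarith) hpos.le
  have hx₁ : ((n : ℝ) - 1) / (2 * t * (n - t)) ≤ 1 / 2 := by
    rw [div_le_iff₀ hpos]; linarith
  unfold epidemicFactor
  constructor <;> linarith

theorem epidemicFactor_pos (h₁ : 1 ≤ t) (h₂ : t < n) : 0 < epidemicFactor n t :=
  lt_of_lt_of_le (by norm_num) (epidemicFactor_mem_Icc h₁ h₂).1

theorem epidemicFactor_sub_one (hn : 2 ≤ n) : epidemicFactor n (n - 1) = 1 / 2 := by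
  have hcast : ((n - 1 : ℕ) : ℝ) = n - 1 := by push_cast [show 1 ≤ n by omega]; ring
  have : (n : ℝ) - 1 ≠ 0 := by
    have : (2 : ℝ) ≤ n := by exact_mod_cast hn
    linarith
  unfold epidemicFactor
  rw [hcast]
  field_simp
  ring

theorem inv_epidemicFactor_le_exp (h₁ : 1 ≤ t) (h₂ : t < n) :
    (epidemicFactor n t)⁻¹ ≤ Real.exp (((n : ℝ) - 1) / (t * (n - t))) := by
  obtain ⟨hlo, hhi⟩ := epidemicFactor_mem_Icc h₁ h₂
  have hx : ((n : ℝ) - 1) / (t * (n - t)) = 2 * (1 - epidemicFactor n t) := by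
    have ht : (t : ℝ) ≠ 0 := by positivity
    have hnt : (n : ℝ) - t ≠ 0 := sub_ne_zero.2 (by exact_mod_cast h₂.ne')
    unfold epidemicFactor
    field_simp
    ring
  rw [hx, inv_le_iff_one_le_mul₀ (by linarith)]
  calc (1 : ℝ) ≤ (2 * (1 - epidemicFactor n t) + 1) * epidemicFactor n t := by nlinarith
    _ ≤ _ := by gcongr; exact Real.add_one_le_exp _

theorem epidemicPotential_of_le (h : n ≤ s) : epidemicPotential n s = 1 := by
  simp [epidemicPotential, Ico_eq_empty_of_le h]

theorem epidemicPotential_succ (h₁ : 1 ≤ s) (h₂ : s < n) :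
    epidemicPotential n (s + 1) = epidemicFactor n s * epidemicPotential n s := by
  rw [epidemicPotential, epidemicPotential, prod_eq_prod_Ico_succ_bot h₂, mul_inv,
    ← mul_assoc, mul_inv_cancel₀ (epidemicFactor_pos h₁ h₂).ne', one_mul]

theorem prod_epidemicFactor_mem_Ioc {m : ℕ} (h₁ : 1 ≤ s) (hm : m ≤ n) :
    ∏ t ∈ Ico s m, epidemicFactor n t ∈ Set.Ioc 0 1 := by
  have hmem : ∀ t ∈ Ico s m, 1 ≤ t ∧ t < n := fun t ht => by
    rw [mem_Ico] at ht; exact ⟨h₁.trans ht.1, ht.2.trans_le hm⟩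
  exact ⟨prod_pos fun t ht => epidemicFactor_pos (hmem t ht).1 (hmem t ht).2,
    prod_le_one (fun t ht => (epidemicFactor_pos (hmem t ht).1 (hmem t ht).2).le)
      fun t ht => (epidemicFactor_mem_Icc (hmem t ht).1 (hmem t ht).2).2⟩

theorem one_le_epidemicPotential (h₁ : 1 ≤ s) : 1 ≤ epidemicPotential n s := by
  obtain ⟨hpos, hle⟩ := prod_epidemicFactor_mem_Ioc (n := n) h₁ le_rfl
  exact one_le_inv_iff₀.2 ⟨hpos, hle⟩

theorem two_le_epidemicPotential (h₁ : 1 ≤ s) (h₂ : s < n) : 2 ≤ epidemicPotential n s := by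
  have hsplit := prod_Ico_succ_top (show s ≤ n - 1 by omega) (epidemicFactor n)
  rw [Nat.sub_add_cancel (by omega), epidemicFactor_sub_one (by omega)] at hsplit
  obtain ⟨hpos, hle⟩ := prod_epidemicFactor_mem_Ioc (n := n) (m := n - 1) h₁ (Nat.sub_le n 1)
  rw [epidemicPotential, hsplit, mul_inv, inv_div, div_one]
  nlinarith [one_le_inv_iff₀.2 ⟨hpos, hle⟩]

theorem epidemicPotential_le (h₁ : 1 ≤ s) :
    epidemicPotential n s ≤ Real.exp (2 + 2 * Real.log n) := by
  have hmem : ∀ t ∈ Ico s n, 1 ≤ t ∧ t < n := fun t ht => by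
    rw [mem_Ico] at ht; exact ⟨h₁.trans ht.1, ht.2⟩
  have hterm : ∀ t ∈ Ico 1 n,
      ((n : ℝ) - 1) / (t * (n - t)) ≤ (t : ℝ)⁻¹ + ((n : ℝ) - t)⁻¹ := by
    intro t ht
    obtain ⟨ht₁, ht₂⟩ := mem_Ico.1 ht
    have ht : (0 : ℝ) < t := by exact_mod_cast ht₁
    have hnt : (0 : ℝ) < n - t := sub_pos.2 (by exact_mod_cast ht₂)
    rw [inv_add_inv ht.ne' hnt.ne']
    exact div_le_div_of_nonneg_right (by linarith) (by positivity)
  calc epidemicPotential n s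
      = ∏ t ∈ Ico s n, (epidemicFactor n t)⁻¹ := (prod_inv_distrib _).symm
    _ ≤ ∏ t ∈ Ico s n, Real.exp (((n : ℝ) - 1) / (t * (n - t))) :=
        prod_le_prod
          (fun t ht => (inv_pos.2 (epidemicFactor_pos (hmem t ht).1 (hmem t ht).2)).le)
          fun t ht => inv_epidemicFactor_le_exp (hmem t ht).1 (hmem t ht).2
    _ = Real.exp (∑ t ∈ Ico s n, ((n : ℝ) - 1) / (t * (n - t))) := (Real.exp_sum _ _).symm
    _ ≤ Real.exp (∑ t ∈ Ico 1 n, ((t : ℝ)⁻¹ + ((n : ℝ) - t)⁻¹)) := by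
        refine Real.exp_le_exp.2 <|
          (sum_le_sum fun t ht => hterm t (Ico_subset_Ico_left h₁ ht)).trans
          (sum_le_sum_of_subset_of_nonneg (Ico_subset_Ico_left h₁) fun t ht _ => ?_)
        have htn : (t : ℝ) ≤ n := by exact_mod_cast (mem_Ico.1 ht).2.le
        exact add_nonneg (inv_nonneg.2 t.cast_nonneg) (inv_nonneg.2 (sub_nonneg.2 htn))
    _ ≤ Real.exp (2 + 2 * Real.log n) := by
        rw [sum_add_distrib, sum_Ico_one_inv_sub_eq]
        have := sum_Ico_one_inv_le_one_add_log n
        exact Real.exp_le_exp.2 (by linarith)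

theorem epidemicPotential_drift (h₁ : 1 ≤ s) (h₂ : s ≤ n) :
    (s * ((n : ℝ) - s)) * (epidemicPotential n (s + 1) - 1)
        + (n * ((n : ℝ) - 1) - s * (n - s)) * (epidemicPotential n s - 1)
      ≤ (1 - 1 / (2 * n)) * (epidemicPotential n s - 1) * (n * (n - 1)) := by
  rcases h₂.lt_or_eq with h₂ | rfl
  · set G := epidemicPotential n s
    have hn : (n : ℝ) ≠ 0 := Nat.cast_ne_zero.2 (by omega)
    have hn1 : (1 : ℝ) ≤ n := by exact_mod_cast h₁.trans h₂.le
    calc (s * ((n : ℝ) - s)) * (epidemicPotential n (s + 1) - 1)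
          + (n * ((n : ℝ) - 1) - s * (n - s)) * (G - 1)
        = (n * ((n : ℝ) - 1) - (n - 1) / 2) * G - n * (n - 1) := by
          rw [epidemicPotential_succ h₁ h₂]
          linear_combination G * mul_epidemicFactor h₁ h₂
      _ ≤ (n * ((n : ℝ) - 1) - (n - 1) / 2) * (G - 1) := by linarith
      _ = (1 - 1 / (2 * n)) * (G - 1) * (n * (n - 1)) := by
          field_simp
  · simp [epidemicPotential_of_le le_rfl, epidemicPotential_of_le (Nat.le_succ s)]

theorem one_le_ofReal_epidemicPotential_sub_one {S : Finset (Fin n)} (hS : S.Nonempty)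
    (hSu : S ≠ univ) : 1 ≤ ENNReal.ofReal (epidemicPotential n #S - 1) := by
  have hlt : #S < n := by simpa using (card_lt_iff_ne_univ S).2 hSu
  have := two_le_epidemicPotential hS.card_pos hlt
  rw [← ENNReal.ofReal_one]
  exact ENNReal.ofReal_le_ofReal (by linarith)

end Potential

theorem lintegral_uniformOn_finset {α : Type*} [MeasurableSpace α] [MeasurableSingletonClass α]
    (s : Finset α) (f : α → ENNReal) :
    ∫⁻ x, f x ∂uniformOn (s : Set α) = (∑ x ∈ s, f x) / #s := by
  rw [uniformOn, ProbabilityTheory.cond, lintegral_smul_measure, lintegral_finset,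
    Measure.count_apply_finset]
  simp [ENNReal.div_eq_inv_mul]

theorem one_sub_one_div_two_mul_nonneg (n : ℕ) : 0 ≤ 1 - 1 / (2 * (n : ℝ)) := by
  rw [sub_nonneg]
  rcases Nat.eq_zero_or_pos n with rfl | hn
  · simp
  · have : (1 : ℝ) ≤ n := by exact_mod_cast hn
    rw [div_le_one (by positivity)]
    linarith

theorem lintegral_epidemicPotential_spread {n : ℕ} {S : Finset (Fin n)} (hS : S.Nonempty) :
    ∫⁻ x, ENNReal.ofReal (epidemicPotential n #(spread S x) - 1)
        ∂uniformOn {p : Fin n × Fin n | p.1 ≠ p.2}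
      ≤ ENNReal.ofReal (1 - 1 / (2 * n)) * ENNReal.ofReal (epidemicPotential n #S - 1) := by
  have hD : {p : Fin n × Fin n | p.1 ≠ p.2} = ((univ : Finset (Fin n)).offDiag : Set _) := by
    ext; simp
  have hs₁ : 1 ≤ #S := hS.card_pos
  have hsn : #S ≤ n := by simpa using card_le_univ S
  have hcompl : #Sᶜ = n - #S := by simp [card_compl]
  have hcard : #(univ : Finset (Fin n)).offDiag = n * (n - 1) := by
    simp [offDiag_card, Nat.mul_sub_one]
  rw [hD, lintegral_uniformOn_finset,
    sum_offDiag_card_spread S fun s => ENNReal.ofReal (epidemicPotential n s - 1), hcompl, hcard]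
  refine ENNReal.div_le_of_le_mul ?_
  have hle : #S * (n - #S) ≤ n * (n - 1) := Nat.mul_le_mul hsn (by omega)
  have hG₀ := one_le_epidemicPotential (n := n) hs₁
  have hG₁ := one_le_epidemicPotential (n := n) (s := #S + 1) (by omega)
  simp only [nsmul_eq_mul, ← ENNReal.ofReal_natCast]
  rw [← ENNReal.ofReal_mul (by positivity), ← ENNReal.ofReal_mul (by positivity),
    ← ENNReal.ofReal_add (mul_nonneg (by positivity) (by linarith))
      (mul_nonneg (by positivity) (by linarith)),
    ← ENNReal.ofReal_mul (one_sub_one_div_two_mul_nonneg n),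
    ← ENNReal.ofReal_mul (mul_nonneg (one_sub_one_div_two_mul_nonneg n) (by linarith))]
  refine ENNReal.ofReal_le_ofReal ?_
  rw [Nat.cast_sub hle, Nat.cast_mul, Nat.cast_mul, Nat.cast_sub hsn,
    Nat.cast_sub (hs₁.trans hsn), Nat.cast_one]
  exact epidemicPotential_drift hs₁ hsn

theorem one_sub_one_div_two_mul_pow_le_exp (n m : ℕ) :
    (1 - 1 / (2 * n : ℝ)) ^ m ≤ Real.exp (-(m / (2 * n))) :=
  calc (1 - 1 / (2 * n : ℝ)) ^ m ≤ Real.exp (-(1 / (2 * n))) ^ m := by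
        gcongr
        · exact one_sub_one_div_two_mul_nonneg n
        · linarith [Real.add_one_le_exp (-(1 / (2 * n : ℝ)))]
    _ = Real.exp (-(m / (2 * n))) := by
        rw [← Real.exp_nat_mul]
        ring_nf

theorem one_sub_pow_floor_mul_epidemicPotential_le_rpow_neg (γ : ℝ) {n s : ℕ} (hn : 2 ≤ n)
    (hs : 1 ≤ s) :
    (1 - 1 / (2 * n : ℝ)) ^ ⌊(2 * γ + 12) * n * Real.log n⌋₊ * (epidemicPotential n s - 1)
      ≤ (n : ℝ) ^ (-γ) := by
  set m := ⌊(2 * γ + 12) * n * Real.log n⌋₊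
  have hn' : (2 : ℝ) ≤ n := by exact_mod_cast hn
  have hlog : 0.6931471803 < Real.log n :=
    Real.log_two_gt_d9.trans_le (Real.log_le_log two_pos hn')
  have hm : (2 * γ + 12) * n * Real.log n - 1 < m := Nat.sub_one_lt_floor _
  have hexponent : 2 + 2 * Real.log n + γ * Real.log n ≤ m / (2 * n) := by
    rw [le_div_iff₀ (by positivity)]
    nlinarith
  have hG := epidemicPotential_le (n := n) hs
  have hG₁ := one_le_epidemicPotential (n := n) hs
  rw [Real.rpow_def_of_pos (by positivity)]
  calc _ ≤ Real.exp (-(m / (2 * n))) * Real.exp (2 + 2 * Real.log n) :=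
        mul_le_mul (one_sub_one_div_two_mul_pow_le_exp n m) (by linarith) (by linarith)
          (Real.exp_pos _).le
    _ ≤ Real.exp (Real.log n * -γ) := by
        rw [← Real.exp_add]
        exact Real.exp_le_exp.2 (by linarith)

/-- One-way epidemic (maximum propagation): for every `γ > 0` there is a constant
`C > 0` such that for every `n ≥ 2`, under the uniform pairwise scheduler
(`X k`, `k ≥ 1`, i.i.d. uniform on ordered pairs of distinct agents of `Fin n`),
starting from any initial values `v₀ : Fin n → ℕ` and updating by
"the responder takes the maximum of the two values", the number `T` of interactions
until every agent holds `max_b v₀(b)` satisfies `P(T > C·n·log n) ≤ n^{-γ}`. -/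
theorem stmt_3 :
    ∀ γ : ℝ, 0 < γ → ∃ C : ℝ, 0 < C ∧
      ∀ (n : ℕ), 2 ≤ n →
      ∀ (Ω : Type) (_ : MeasurableSpace Ω) (μ : Measure Ω), IsProbabilityMeasure μ →
      ∀ (X : ℕ → Ω → Fin n × Fin n), (∀ k, Measurable (X k)) →
        iIndepFun (fun k => X (k + 1)) μ →
        (∀ k, 1 ≤ k →
          Measure.map (X k) μ = uniformOn {p : Fin n × Fin n | p.1 ≠ p.2}) →
      ∀ (v₀ : Fin n → ℕ) (v : ℕ → Ω → Fin n → ℕ),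
        (∀ ω a, v 0 ω a = v₀ a) →
        (∀ k ω a, v (k + 1) ω a =
          if a = (X (k + 1) ω).2
          then max (v k ω (X (k + 1) ω).1) (v k ω (X (k + 1) ω).2)
          else v k ω a) →
      ∀ (T : Ω → ℕ),
        (∀ ω, T ω = sInf {k | ∀ a, v k ω a = Finset.univ.sup v₀}) →
        μ {ω | C * n * Real.log n < (T ω : ℝ)} ≤ ENNReal.ofReal ((n : ℝ) ^ (-γ)) := by
  intro γ hγ
  refine ⟨2 * γ + 12, by linarith, ?_⟩
  intro n hn Ω _ μ _ X hX hind hlaw v₀ v hv₀ hv T hT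
  let _ : MeasurableSpace (Finset (Fin n)) := ⊤
  set S₀ := univ.filter fun a => v₀ a = univ.sup v₀
  set Z := trajectory spread S₀ fun k => X (k + 1)
  set Φ : Finset (Fin n) → ENNReal := fun S => ENNReal.ofReal (epidemicPotential n #S - 1)
  set m := ⌊(2 * γ + 12) * n * Real.log n⌋₊
  have hS₀ : S₀.Nonempty := by
    obtain ⟨a, -, ha⟩ :=
      exists_mem_eq_sup univ (univ_nonempty_iff.2 ⟨⟨0, by omega⟩⟩) v₀
    exact ⟨a, mem_filter.2 ⟨mem_univ a, ha.symm⟩⟩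
  have hZ : ∀ k ω, (Z k ω).Nonempty := trajectory_invariant hS₀ fun S x hS => hS.spread x
  have hF : Measurable (Function.uncurry (spread (ι := Fin n))) := Measurable.of_discrete
  have hevent :
      {ω | (2 * γ + 12) * n * Real.log n < (T ω : ℝ)} ⊆ {ω | 1 ≤ Φ (Z m ω)} := by
    intro ω (hω : _ < (T ω : ℝ))
    refine one_le_ofReal_epidemicPotential_sub_one (hZ m ω) fun hdone => hω.not_ge ?_
    have hall := filter_eq_self.1 ((filter_eq_trajectory_spread hv₀ hv m ω).trans hdone)
    have hTm : T ω ≤ m := by rw [hT ω]; exact Nat.sInf_le fun a => hall a (mem_univ a)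
    exact (Nat.cast_le.2 hTm).trans (Nat.floor_le (by positivity))
  calc μ {ω | (2 * γ + 12) * n * Real.log n < (T ω : ℝ)}
      ≤ μ {ω | 1 ≤ Φ (Z m ω)} := measure_mono hevent
    _ ≤ ∫⁻ ω, Φ (Z m ω) ∂μ := by
        simpa using mul_meas_ge_le_lintegral₀
          (Measurable.of_discrete.comp (measurable_trajectory hF (fun k => hX _) m)).aemeasurable 1
    _ ≤ ENNReal.ofReal (1 - 1 / (2 * n)) ^ m * Φ S₀ :=
        lintegral_trajectory_le_pow_mul hF (fun k => hX _) hind Measurable.of_discrete hS₀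
          (fun S x hS => hS.spread x)
          (fun k S hS => hlaw (k + 1) (by omega) ▸ lintegral_epidemicPotential_spread hS) m
    _ ≤ ENNReal.ofReal ((n : ℝ) ^ (-γ)) := by
        have hβ := one_sub_one_div_two_mul_nonneg n
        rw [← ENNReal.ofReal_pow hβ, ← ENNReal.ofReal_mul (pow_nonneg hβ m)]
        exact ENNReal.ofReal_le_ofReal
          (one_sub_pow_floor_mul_epidemicPotential_le_rpow_neg γ hn hS₀.card_pos)
end

section
/- Let N ≥ 1 and k ≥ 1 be natural numbers and let X₁, …, X_k be independent random variables, each uniformly distributed on Fin N. Then the probability that there exists an index i with X_j < X_i for all j ≠ i (i.e., the maximum is attained at a unique index) is at least 1 − (k−1)/N. -/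
open MeasureTheory ProbabilityTheory Finset

/-! A tie for the maximum forces some `X j` with `j ≠ 0` to equal the maximum of the other
variables. That maximum is a function of variables independent of `X j`, and a uniform variable
on `Fin N` hits any independent variable with probability exactly `1/N`; a union bound over the
`k - 1` indices `j ≠ 0` finishes the proof. -/

lemma exists_ne_eq_sup_erase_of_not_exists_strictMax {ι α : Type*} [Fintype ι] [DecidableEq ι]
    [LinearOrder α] [OrderBot α] (f : ι → α) (i₀ : ι)
    (h : ¬∃ i, ∀ j, j ≠ i → f j < f i) : ∃ j ≠ i₀, f j = (univ.erase j).sup f := by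
  obtain ⟨m, -, hm⟩ := exists_max_image univ f ⟨i₀, mem_univ i₀⟩
  have hmax (i : ι) : f i ≤ f m := hm i (mem_univ i)
  obtain ⟨j, hjm, hfj⟩ : ∃ j, j ≠ m ∧ f j = f m := by
    push Not at h
    obtain ⟨j, hjm, hle⟩ := h m
    exact ⟨j, hjm, le_antisymm (hmax j) hle⟩
  have tie {a b : ι} (hab : a ≠ b) (hb : ∀ i, f i ≤ f b) (hfa : f a = f b) :
      f b = (univ.erase b).sup f :=
    le_antisymm (hfa ▸ le_sup (mem_erase.2 ⟨hab, mem_univ a⟩))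
      (Finset.sup_le fun i _ => hb i)
  by_cases hj : j = i₀
  · exact ⟨m, fun hm₀ => hjm (hj.trans hm₀.symm), tie hjm hmax hfj⟩
  · exact ⟨j, hj, tie (Ne.symm hjm) (hfj ▸ hmax) hfj.symm⟩

namespace ProbabilityTheory

variable {Ω : Type*} [MeasurableSpace Ω] {μ : Measure Ω}

lemma iIndepFun.indepFun_comp_of_notMem {ι β γ : Type*} [MeasurableSpace β] [MeasurableSpace γ]
    {f : ι → Ω → β} (hf : iIndepFun f μ) (hmeas : ∀ i, Measurable (f i)) {s : Finset ι} {i : ι}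
    (hi : i ∉ s) {φ : (s → β) → γ} (hφ : Measurable φ) :
    IndepFun (f i) (fun ω => φ fun l : s => f l ω) μ :=
  (hf.indepFun_finset {i} s (disjoint_singleton_left.2 hi) hmeas).comp
    (measurable_pi_apply (⟨i, mem_singleton_self i⟩ : ({i} : Finset ι))) hφ

variable {α : Type*} [Fintype α] [MeasurableSpace α] [MeasurableSingletonClass α]

lemma IndepFun.measure_eq_eq_inv_card [IsProbabilityMeasure μ] {X Y : Ω → α}
    (hXY : IndepFun X Y μ) (hX : Measurable X) (hY : Measurable Y)
    (hunif : μ.map X = uniformOn (Set.univ : Set α)) :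
    μ {ω | X ω = Y ω} = (Fintype.card α : ENNReal)⁻¹ := by
  have hfiber (a : α) : μ (X ⁻¹' {a}) = (Fintype.card α : ENNReal)⁻¹ := by
    rw [← Measure.map_apply hX (measurableSet_singleton a), hunif, uniformOn_univ,
      Measure.count_singleton, one_div]
  have hdiag : {ω | X ω = Y ω} = ⋃ a, X ⁻¹' {a} ∩ Y ⁻¹' {a} := by
    ext ω; simp [eq_comm]
  rw [hdiag, measure_iUnion
    (fun a b hab => (pairwise_disjoint_fiber X hab).mono Set.inter_subset_left
      Set.inter_subset_left)
    (fun a => (hX (measurableSet_singleton a)).inter (hY (measurableSet_singleton a))),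
    tsum_fintype]
  simp_rw [hXY.measure_inter_preimage_eq_mul _ _ (measurableSet_singleton _)
    (measurableSet_singleton _), hfiber, ← mul_sum]
  rw [sum_measure_preimage_singleton _ fun a _ => hY (measurableSet_singleton a)]
  simp

lemma iIndepFun.measure_eq_sup_erase {ι : Type*} [Fintype ι] [DecidableEq ι] [LinearOrder α]
    [OrderBot α] {X : ι → Ω → α} (hX : iIndepFun X μ) (hmeas : ∀ i, Measurable (X i)) {j : ι}
    (hunif : μ.map (X j) = uniformOn (Set.univ : Set α)) :
    μ {ω | X j ω = (univ.erase j).sup fun l => X l ω} = (Fintype.card α : ENNReal)⁻¹ := by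
  have := hX.isProbabilityMeasure
  have hindep : IndepFun (X j) (fun ω => (univ.erase j).sup fun l => X l ω) μ := by
    simpa [← sup_attach (univ.erase j)] using hX.indepFun_comp_of_notMem hmeas
      (s := univ.erase j) (notMem_erase j univ) (φ := fun v => univ.sup v)
      (measurable_of_finite _)
  exact hindep.measure_eq_eq_inv_card (hmeas j)
    ((measurable_of_finite fun v : ι → α => (univ.erase j).sup v).comp
      (measurable_pi_lambda _ hmeas)) hunif

end ProbabilityTheory

/-- If `X₁, …, X_k` are independent random variables, each uniform on `Fin N` (`N ≥ 1`),
then the maximum is attained at a unique index with probability at least `1 - (k-1)/N`. -/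
theorem stmt_5 (N k : ℕ) (hN : 1 ≤ N) (hk : 1 ≤ k)
    {Ω : Type*} [MeasurableSpace Ω] (μ : Measure Ω) [IsProbabilityMeasure μ]
    (X : Fin k → Ω → Fin N) (hmeas : ∀ i, Measurable (X i))
    (hindep : iIndepFun X μ)
    (hunif : ∀ i, Measure.map (X i) μ = uniformOn (Set.univ : Set (Fin N))) :
    1 - ((k : ℝ) - 1) / N ≤
      (μ {ω | ∃ i, ∀ j, j ≠ i → X j ω < X i ω}).toReal := by
  have : NeZero N := ⟨by omega⟩
  set A := {ω | ∃ i, ∀ j, j ≠ i → X j ω < X i ω}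
  let i₀ : Fin k := ⟨0, hk⟩
  let Tie (j : Fin k) : Set Ω := {ω | X j ω = (univ.erase j).sup fun l => X l ω}
  have hcompl : Aᶜ ⊆ ⋃ j ∈ univ.erase i₀, Tie j := by
    intro ω hω
    obtain ⟨j, hj, hjmax⟩ := exists_ne_eq_sup_erase_of_not_exists_strictMax (X · ω) i₀ hω
    exact Set.mem_biUnion (mem_erase.2 ⟨hj, mem_univ j⟩) hjmax
  have hAc : μ.real Aᶜ ≤ ((k : ℝ) - 1) / N :=
    calc μ.real Aᶜ ≤ ∑ j ∈ univ.erase i₀, μ.real (Tie j) :=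
          (measureReal_mono hcompl (measure_ne_top _ _)).trans (measureReal_biUnion_finset_le _ _)
      _ = ((k : ℝ) - 1) / N := by
          simp [Tie, measureReal_def, hindep.measure_eq_sup_erase hmeas (hunif _),
            card_erase_of_mem, Nat.cast_sub hk, div_eq_mul_inv]
  have hsplit : 1 ≤ μ.real A + μ.real Aᶜ := by
    simpa using measureReal_union_le (μ := μ) A Aᶜ
  rw [← measureReal_def]
  linarith
end

section
/- Let n ≥ 4 and let D ⊆ Fin n with |D| = ρ, where 1 ≤ ρ and 2ρ < n. For each a ∈ Fin n \ D let τ_a be the least k ≥ 1 such that the k-th pair X_k consists of a and an element of D (in either order), and let T = max_{a ∉ D} τ_a. Then the expectation of T is at least (n² · ln n)/(8ρ). -/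
/-!
A non-deputy `a` is met exactly when `X k` falls in the `2ρ` ordered pairs joining `a` to a
deputy, so `τ a` is geometric with parameter `p = 2ρ / (n (n - 1))` and `E[τ a] = 1 / p`. When
`log n ≤ 3` this single waiting time already exceeds the bound. Otherwise apply the second moment
method to the number `Z` of non-deputies not yet met after `k` steps: distinct non-deputies have
disjoint sets of meeting pairs, so the events `τ a > k` are negatively correlated and
`E[Z²] ≤ E[Z] + E[Z]²`. Hence `P(T > k) = P(Z > 0) ≥ 1/2` as long as
`E[Z] = (n - ρ)(1 - p)^k ≥ 1`, i.e. for about `log(n - ρ) (1 - p) / p` steps, and summing the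
tail `E[T] = ∑ₖ P(T > k)` gives the claim.
-/

open MeasureTheory ProbabilityTheory Finset
open scoped ENNReal

section SecondMoment

variable {Ω : Type*} [MeasurableSpace Ω] {μ : Measure Ω}

theorem lintegral_natCast_eq_tsum_measure_lt {f : Ω → ℕ} (hf : Measurable f) :
    ∫⁻ ω, (f ω : ℝ≥0∞) ∂μ = ∑' k, μ {ω | k < f ω} := by
  have hmeas (k : ℕ) : MeasurableSet {ω | k < f ω} := hf measurableSet_Ioi
  have hsum (ω : Ω) : (f ω : ℝ≥0∞) = ∑' k, {ω | k < f ω}.indicator 1 ω := by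
    rw [tsum_eq_sum (s := range (f ω)) fun k hk => by simp_all]
    simp [Set.indicator_apply, filter_true_of_mem fun k hk => mem_range.1 hk]
  simp_rw [hsum, lintegral_tsum fun k => (measurable_one.indicator (hmeas k)).aemeasurable,
    lintegral_indicator_one (hmeas _)]

theorem integral_natCast_eq_toReal_lintegral {f : Ω → ℕ} (hf : Measurable f) :
    ∫ ω, (f ω : ℝ) ∂μ = (∫⁻ ω, (f ω : ℝ≥0∞) ∂μ).toReal := by
  rw [integral_eq_lintegral_of_nonneg_ae (ae_of_all _ fun ω => Nat.cast_nonneg _)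
    (measurable_from_top.comp hf).aestronglyMeasurable]
  simp_rw [ENNReal.ofReal_natCast]

theorem sq_lintegral_le_lintegral_sq_mul_measure {Z : Ω → ℝ≥0∞} (hZ : Measurable Z)
    {A : Set Ω} (hA : MeasurableSet A) (hZA : ∀ ω ∉ A, Z ω = 0) :
    (∫⁻ ω, Z ω ∂μ) ^ 2 ≤ (∫⁻ ω, Z ω ^ 2 ∂μ) * μ A := by
  have hZ_eq : Z = Z * A.indicator 1 := by
    ext ω
    by_cases h : ω ∈ A <;> simp [h, hZA]
  have hCS := ENNReal.lintegral_mul_le_Lp_mul_Lq μ Real.HolderConjugate.two_two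
    hZ.aemeasurable (measurable_one.indicator hA).aemeasurable
  rw [← hZ_eq] at hCS
  have hind : (fun ω => A.indicator (1 : Ω → ℝ≥0∞) ω ^ (2 : ℝ)) = A.indicator 1 := by
    ext ω
    by_cases h : ω ∈ A <;> simp [h]
  rw [hind, lintegral_indicator_one hA] at hCS
  calc (∫⁻ ω, Z ω ∂μ) ^ 2
      ≤ ((∫⁻ ω, Z ω ^ (2 : ℝ) ∂μ) ^ (1 / (2 : ℝ)) * μ A ^ (1 / (2 : ℝ))) ^ 2 := by
        gcongr
    _ = (∫⁻ ω, Z ω ^ 2 ∂μ) * μ A := by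
      simp_rw [mul_pow, ← ENNReal.rpow_natCast, ← ENNReal.rpow_mul]
      norm_num

variable {ι : Type*}

theorem lintegral_sq_sum_indicator (s : Finset ι) {A : ι → Set Ω}
    (hA : ∀ i, MeasurableSet (A i)) :
    ∫⁻ ω, (∑ i ∈ s, (A i).indicator 1 ω) ^ 2 ∂μ =
      ∑ i ∈ s, ∑ j ∈ s, μ (A i ∩ A j) := by
  classical
  have hsq (ω : Ω) : (∑ i ∈ s, (A i).indicator (1 : Ω → ℝ≥0∞) ω) ^ 2 =
      ∑ i ∈ s, ∑ j ∈ s, (A i ∩ A j).indicator 1 ω := by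
    simp_rw [sq, sum_mul_sum, Set.indicator_apply, Set.mem_inter_iff]
    refine sum_congr rfl fun i _ => sum_congr rfl fun j _ => ?_
    split_ifs <;> simp_all
  have hmeas (i j : ι) : Measurable ((A i ∩ A j).indicator (1 : Ω → ℝ≥0∞)) :=
    measurable_one.indicator ((hA i).inter (hA j))
  simp_rw [hsq]
  rw [lintegral_finsetSum _ fun i _ => measurable_sum _ fun j _ => hmeas i j]
  simp_rw [lintegral_finsetSum _ fun j _ => hmeas _ j,
    lintegral_indicator_one ((hA _).inter (hA _))]

theorem sq_sum_measure_le_mul_measure_biUnion (s : Finset ι) {A : ι → Set Ω}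
    (hA : ∀ i, MeasurableSet (A i))
    (hcorr : ∀ i ∈ s, ∀ j ∈ s, i ≠ j → μ (A i ∩ A j) ≤ μ (A i) * μ (A j)) :
    (∑ i ∈ s, μ (A i)) ^ 2 ≤
      (∑ i ∈ s, μ (A i) + (∑ i ∈ s, μ (A i)) ^ 2) * μ (⋃ i ∈ s, A i) := by
  set Z : Ω → ℝ≥0∞ := fun ω => ∑ i ∈ s, (A i).indicator 1 ω
  have hZ : Measurable Z := measurable_sum _ fun i _ => measurable_one.indicator (hA i)
  have hZ_int : ∫⁻ ω, Z ω ∂μ = ∑ i ∈ s, μ (A i) := by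
    rw [lintegral_finsetSum _ fun i _ => measurable_one.indicator (hA i)]
    simp_rw [lintegral_indicator_one (hA _)]
  have hrow (i : ι) (hi : i ∈ s) :
      ∑ j ∈ s, μ (A i ∩ A j) ≤ μ (A i) + μ (A i) * ∑ j ∈ s, μ (A j) := by
    classical
    rw [← add_sum_erase s _ hi, Set.inter_self, mul_sum]
    refine add_le_add_right ((sum_le_sum fun j hj => ?_).trans
      (sum_le_sum_of_subset (erase_subset i s))) _
    exact hcorr i hi j (mem_of_mem_erase hj) (ne_of_mem_erase hj).symm
  have hZ_sq_int :
      ∫⁻ ω, Z ω ^ 2 ∂μ ≤ ∑ i ∈ s, μ (A i) + (∑ i ∈ s, μ (A i)) ^ 2 :=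
    calc ∫⁻ ω, Z ω ^ 2 ∂μ = ∑ i ∈ s, ∑ j ∈ s, μ (A i ∩ A j) :=
          lintegral_sq_sum_indicator s hA
      _ ≤ ∑ i ∈ s, (μ (A i) + μ (A i) * ∑ j ∈ s, μ (A j)) := sum_le_sum hrow
      _ = _ := by rw [sum_add_distrib, ← sum_mul, sq]
  have hZ_zero : ∀ ω ∉ ⋃ i ∈ s, A i, Z ω = 0 := by
    intro ω hω
    simp only [Set.mem_iUnion, not_exists] at hω
    exact sum_eq_zero fun i hi => Set.indicator_of_notMem (hω i hi) _
  calc (∑ i ∈ s, μ (A i)) ^ 2 = (∫⁻ ω, Z ω ∂μ) ^ 2 := by rw [hZ_int]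
    _ ≤ (∫⁻ ω, Z ω ^ 2 ∂μ) * μ (⋃ i ∈ s, A i) :=
      sq_lintegral_le_lintegral_sq_mul_measure hZ
        (measurableSet_biUnion s fun i _ => hA i) hZ_zero
    _ ≤ _ := by gcongr

theorem inv_two_le_measure_biUnion [IsFiniteMeasure μ] (s : Finset ι) {A : ι → Set Ω}
    (hA : ∀ i, MeasurableSet (A i))
    (hcorr : ∀ i ∈ s, ∀ j ∈ s, i ≠ j → μ (A i ∩ A j) ≤ μ (A i) * μ (A j))
    (hone : 1 ≤ ∑ i ∈ s, μ (A i)) :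
    2⁻¹ ≤ μ (⋃ i ∈ s, A i) := by
  set x := ∑ i ∈ s, μ (A i)
  have hx_top : x ≠ ∞ := ENNReal.sum_ne_top.2 fun i _ => measure_ne_top μ (A i)
  have hx_sq_ne_zero : x ^ 2 ≠ 0 := pow_ne_zero 2 (zero_lt_one.trans_le hone).ne'
  have hx_le : x ≤ x ^ 2 := by simpa [sq] using mul_le_mul_right hone x
  have h : x ^ 2 * 1 ≤ x ^ 2 * (2 * μ (⋃ i ∈ s, A i)) :=
    calc x ^ 2 * 1 = x ^ 2 := mul_one _
      _ ≤ (x + x ^ 2) * μ (⋃ i ∈ s, A i) := sq_sum_measure_le_mul_measure_biUnion s hA hcorr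
      _ ≤ (x ^ 2 + x ^ 2) * μ (⋃ i ∈ s, A i) := by gcongr
      _ = x ^ 2 * (2 * μ (⋃ i ∈ s, A i)) := by ring
  rw [ENNReal.mul_le_mul_iff_right hx_sq_ne_zero (ENNReal.pow_ne_top hx_top)] at h
  rwa [ENNReal.inv_le_iff_le_mul (by simp) (by simp)]

end SecondMoment

section FirstHit

variable {Ω α : Type*}

-- `sInf ∅ = 0`: a set that is never hit has `firstHit = 0`, hence the hit in `lt_firstHit_iff`.
noncomputable def firstHit (X : ℕ → Ω → α) (E : Set α) (ω : Ω) : ℕ :=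
  sInf {k | 1 ≤ k ∧ X k ω ∈ E}

noncomputable def coverTime {ι : Type*} (X : ℕ → Ω → α) (R : Finset ι) (E : ι → Set α)
    (ω : Ω) : ℕ :=
  R.sup fun i => firstHit X (E i) ω

theorem lt_firstHit_iff {X : ℕ → Ω → α} {E : Set α} {ω : Ω} {k : ℕ} :
    k < firstHit X E ω ↔ (∀ j < k, X (j + 1) ω ∉ E) ∧ ∃ j, X (j + 1) ω ∈ E := by
  set S := {k | 1 ≤ k ∧ X k ω ∈ E}
  constructor
  · intro hk
    have hS : S.Nonempty := by
      by_contra hS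
      rw [Set.not_nonempty_iff_eq_empty] at hS
      simp [firstHit, S, hS] at hk
    obtain ⟨i, hi1, hiE⟩ := hS
    refine ⟨fun j hj hjE => ?_, i - 1, by rwa [Nat.sub_add_cancel hi1]⟩
    have : firstHit X E ω ≤ j + 1 := Nat.sInf_le ⟨j.succ_pos, hjE⟩
    omega
  · rintro ⟨hmiss, j, hj⟩
    obtain ⟨h1, hE⟩ : sInf S ∈ S := Nat.sInf_mem ⟨j + 1, j.succ_pos, hj⟩
    by_contra hle
    change ¬k < sInf S at hle
    exact hmiss (sInf S - 1) (by omega) (by rwa [Nat.sub_add_cancel h1])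

variable [MeasurableSpace Ω] [MeasurableSpace α]

structure IsIIDSeq (X : ℕ → Ω → α) (μ : Measure Ω) (ν : Measure α) : Prop where
  measurable : ∀ k, Measurable (X k)
  indep : iIndepFun (fun k => X (k + 1)) μ
  map_eq : ∀ k, 1 ≤ k → μ.map (X k) = ν

theorem measurable_firstHit {X : ℕ → Ω → α} (hXm : ∀ k, Measurable (X k)) {E : Set α}
    (hE : MeasurableSet E) : Measurable (firstHit X E) := by
  refine measurable_of_Ioi fun k => ?_
  have : firstHit X E ⁻¹' Set.Ioi k =
      (⋂ j ∈ range k, X (j + 1) ⁻¹' Eᶜ) ∩ ⋃ j, X (j + 1) ⁻¹' E := by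
    ext ω
    simp [lt_firstHit_iff]
  rw [this]
  exact (measurableSet_biInter _ fun j _ => hXm _ hE.compl).inter
    (MeasurableSet.iUnion fun j => hXm _ hE)

theorem measurable_coverTime {ι : Type*} (R : Finset ι) {X : ℕ → Ω → α}
    (hXm : ∀ k, Measurable (X k)) {E : ι → Set α} (hE : ∀ i, MeasurableSet (E i)) :
    Measurable (coverTime X R E) := by
  refine measurable_of_Ioi fun k => ?_
  have : coverTime X R E ⁻¹' Set.Ioi k =
      ⋃ i ∈ R, firstHit X (E i) ⁻¹' Set.Ioi k := by
    ext ω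
    simp [coverTime, Finset.lt_sup_iff]
  rw [this]
  exact measurableSet_biUnion R fun i _ => measurable_firstHit hXm (hE i) measurableSet_Ioi

theorem measure_compl_union_le_mul (ν : Measure α) [IsProbabilityMeasure ν] {A B : Set α}
    (hA : MeasurableSet A) (hB : MeasurableSet B) (hAB : Disjoint A B) :
    ν (A ∪ B)ᶜ ≤ ν Aᶜ * ν Bᶜ := by
  have hreal : ν.real (A ∪ B)ᶜ ≤ ν.real Aᶜ * ν.real Bᶜ := by
    rw [probReal_compl_eq_one_sub (hA.union hB), measureReal_union hAB hB,
      probReal_compl_eq_one_sub hA, probReal_compl_eq_one_sub hB]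
    nlinarith [measureReal_nonneg (μ := ν) (s := A), measureReal_nonneg (μ := ν) (s := B)]
  rw [← ofReal_measureReal, ← ofReal_measureReal, ← ofReal_measureReal,
    ← ENNReal.ofReal_mul measureReal_nonneg]
  exact ENNReal.ofReal_le_ofReal hreal

namespace IsIIDSeq

variable {μ : Measure Ω} {ν : Measure α} {X : ℕ → Ω → α}

theorem isProbabilityMeasure [IsProbabilityMeasure μ] (hX : IsIIDSeq X μ ν) :
    IsProbabilityMeasure ν :=
  hX.map_eq 1 le_rfl ▸ Measure.isProbabilityMeasure_map (hX.measurable 1).aemeasurable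

theorem measure_forall_lt_notMem (hX : IsIIDSeq X μ ν) {E : Set α} (hE : MeasurableSet E)
    (k : ℕ) :
    μ {ω | ∀ j < k, X (j + 1) ω ∉ E} = ν Eᶜ ^ k := by
  have : {ω | ∀ j < k, X (j + 1) ω ∉ E} = ⋂ j ∈ range k, X (j + 1) ⁻¹' Eᶜ := by
    ext ω
    simp
  rw [this, hX.indep.measure_inter_preimage_eq_mul _ fun _ _ => hE.compl]
  simp_rw [← Measure.map_apply (hX.measurable _) hE.compl, hX.map_eq _ (Nat.le_add_left 1 _)]
  simp

theorem measure_forall_notMem [IsProbabilityMeasure ν] (hX : IsIIDSeq X μ ν) {E : Set α}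
    (hE : MeasurableSet E) (hνE : ν E ≠ 0) :
    μ {ω | ∀ j, X (j + 1) ω ∉ E} = 0 := by
  have hlt : ν Eᶜ < 1 := by
    rw [prob_compl_eq_one_sub hE]
    exact ENNReal.sub_lt_self ENNReal.one_ne_top one_ne_zero hνE
  refine le_antisymm (ge_of_tendsto (ENNReal.tendsto_pow_atTop_nhds_zero_of_lt_one hlt)
    (Filter.Eventually.of_forall fun k => ?_)) zero_le
  rw [← hX.measure_forall_lt_notMem hE k]
  exact measure_mono fun ω hω j _ => hω j

theorem measure_lt_firstHit [IsProbabilityMeasure ν] (hX : IsIIDSeq X μ ν) {E : Set α}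
    (hE : MeasurableSet E) (hνE : ν E ≠ 0) (k : ℕ) :
    μ {ω | k < firstHit X E ω} = ν Eᶜ ^ k := by
  have : {ω | k < firstHit X E ω} =
      {ω | ∀ j < k, X (j + 1) ω ∉ E} ∩ {ω | ∀ j, X (j + 1) ω ∉ E}ᶜ := by
    ext ω
    simp [lt_firstHit_iff]
  rw [this, measure_inter_conull (by rw [compl_compl]; exact hX.measure_forall_notMem hE hνE),
    hX.measure_forall_lt_notMem hE]

theorem measure_lt_firstHit_inter_le [IsProbabilityMeasure ν] (hX : IsIIDSeq X μ ν)
    {A B : Set α} (hA : MeasurableSet A) (hB : MeasurableSet B) (hAB : Disjoint A B)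
    (hνA : ν A ≠ 0) (hνB : ν B ≠ 0) (k : ℕ) :
    μ ({ω | k < firstHit X A ω} ∩ {ω | k < firstHit X B ω}) ≤
      μ {ω | k < firstHit X A ω} * μ {ω | k < firstHit X B ω} := by
  have hsub : {ω | k < firstHit X A ω} ∩ {ω | k < firstHit X B ω} ⊆
      {ω | ∀ j < k, X (j + 1) ω ∉ A ∪ B} := by
    rintro ω ⟨hωA, hωB⟩ j hj (hjA | hjB)
    · exact (lt_firstHit_iff.1 hωA).1 j hj hjA
    · exact (lt_firstHit_iff.1 hωB).1 j hj hjB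
  calc _ ≤ μ {ω | ∀ j < k, X (j + 1) ω ∉ A ∪ B} := measure_mono hsub
    _ = ν (A ∪ B)ᶜ ^ k := hX.measure_forall_lt_notMem (hA.union hB) k
    _ ≤ (ν Aᶜ * ν Bᶜ) ^ k := by gcongr; exact measure_compl_union_le_mul ν hA hB hAB
    _ = _ := by rw [mul_pow, hX.measure_lt_firstHit hA hνA, hX.measure_lt_firstHit hB hνB]

theorem lintegral_firstHit [IsProbabilityMeasure ν] (hX : IsIIDSeq X μ ν) {E : Set α}
    (hE : MeasurableSet E) (hνE : ν E ≠ 0) :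
    ∫⁻ ω, (firstHit X E ω : ℝ≥0∞) ∂μ = (ν E)⁻¹ := by
  simp_rw [lintegral_natCast_eq_tsum_measure_lt (measurable_firstHit hX.measurable hE),
    hX.measure_lt_firstHit hE hνE, ENNReal.tsum_geometric, prob_compl_eq_one_sub hE,
    ENNReal.sub_sub_cancel ENNReal.one_ne_top prob_le_one]

variable {ι : Type*} {E : ι → Set α}

theorem lintegral_coverTime_lt_top [IsProbabilityMeasure ν] (hX : IsIIDSeq X μ ν)
    (R : Finset ι) (hE : ∀ i, MeasurableSet (E i)) (hνE : ∀ i ∈ R, ν (E i) ≠ 0) :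
    ∫⁻ ω, (coverTime X R E ω : ℝ≥0∞) ∂μ < ∞ := by
  have hle (ω : Ω) : R.sup (fun i => firstHit X (E i) ω) ≤ ∑ i ∈ R, firstHit X (E i) ω :=
    Finset.sup_le fun i hi =>
      single_le_sum (f := fun i => firstHit X (E i) ω) (fun _ _ => Nat.zero_le _) hi
  calc _ ≤ ∫⁻ ω, ∑ i ∈ R, (firstHit X (E i) ω : ℝ≥0∞) ∂μ :=
        lintegral_mono fun ω => (Nat.cast_le.2 (hle ω)).trans_eq (Nat.cast_sum _ _)
    _ = ∑ i ∈ R, (ν (E i))⁻¹ := by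
        rw [lintegral_finsetSum R (f := fun i ω => (firstHit X (E i) ω : ℝ≥0∞)) fun i _ =>
          measurable_from_top.comp (measurable_firstHit hX.measurable (hE i))]
        exact sum_congr rfl fun i hi => hX.lintegral_firstHit (hE i) (hνE i hi)
    _ < ∞ := ENNReal.sum_lt_top.2 fun i hi => ENNReal.inv_lt_top.2 (pos_iff_ne_zero.2 (hνE i hi))

theorem inv_two_le_measure_lt_coverTime [IsProbabilityMeasure μ] [IsProbabilityMeasure ν]
    (hX : IsIIDSeq X μ ν) (R : Finset ι) (hE : ∀ i, MeasurableSet (E i))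
    (hνE : ∀ i ∈ R, ν (E i) ≠ 0) (hdisj : (R : Set ι).PairwiseDisjoint E) {k : ℕ}
    (hk : 1 ≤ ∑ i ∈ R, ν (E i)ᶜ ^ k) :
    2⁻¹ ≤ μ {ω | k < coverTime X R E ω} := by
  have hunion : {ω | k < coverTime X R E ω} =
      ⋃ i ∈ R, {ω | k < firstHit X (E i) ω} := by
    ext ω
    simp [coverTime, Finset.lt_sup_iff]
  rw [hunion]
  refine inv_two_le_measure_biUnion R
    (fun i => measurable_firstHit hX.measurable (hE i) measurableSet_Ioi)
    (fun i hi j hj hij => hX.measure_lt_firstHit_inter_le (hE i) (hE j) (hdisj hi hj hij)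
      (hνE i hi) (hνE j hj) k) ?_
  rwa [sum_congr rfl fun i hi => hX.measure_lt_firstHit (hE i) (hνE i hi) k]

theorem add_one_div_two_le_lintegral_coverTime [IsProbabilityMeasure μ] [IsProbabilityMeasure ν]
    (hX : IsIIDSeq X μ ν) (R : Finset ι) (hE : ∀ i, MeasurableSet (E i))
    (hνE : ∀ i ∈ R, ν (E i) ≠ 0) (hdisj : (R : Set ι).PairwiseDisjoint E) {K : ℕ}
    (hK : 1 ≤ ∑ i ∈ R, ν (E i)ᶜ ^ K) :
    ((K : ℝ≥0∞) + 1) / 2 ≤ ∫⁻ ω, (coverTime X R E ω : ℝ≥0∞) ∂μ := by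
  have hk (k : ℕ) (hk : k ≤ K) : 1 ≤ ∑ i ∈ R, ν (E i)ᶜ ^ k :=
    hK.trans (sum_le_sum fun i _ => pow_le_pow_of_le_one zero_le prob_le_one hk)
  calc ((K : ℝ≥0∞) + 1) / 2 = ∑ k ∈ range (K + 1), 2⁻¹ := by
        simp [div_eq_mul_inv]
    _ ≤ ∑ k ∈ range (K + 1), μ {ω | k < coverTime X R E ω} :=
        sum_le_sum fun k hk' => hX.inv_two_le_measure_lt_coverTime R hE hνE hdisj
          (hk k (Nat.lt_succ_iff.1 (mem_range.1 hk')))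
    _ ≤ ∑' k, μ {ω | k < coverTime X R E ω} := ENNReal.sum_le_tsum _
    _ = _ := (lintegral_natCast_eq_tsum_measure_lt
          (measurable_coverTime R hX.measurable hE)).symm

end IsIIDSeq

end FirstHit

section Scheduler

variable {n : ℕ}

noncomputable abbrev pairScheduler (n : ℕ) : Measure (Fin n × Fin n) :=
  uniformOn {p | p.1 ≠ p.2}

def meetingPairs (D : Finset (Fin n)) (a : Fin n) : Finset (Fin n × Fin n) :=
  {a} ×ˢ D ∪ D ×ˢ {a}

noncomputable def meetingProb (n ρ : ℕ) : ℝ :=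
  2 * ρ / (n * (n - 1))

variable {D : Finset (Fin n)} {a b : Fin n}

theorem mem_meetingPairs {p : Fin n × Fin n} :
    p ∈ meetingPairs D a ↔ (p.1 = a ∧ p.2 ∈ D) ∨ (p.2 = a ∧ p.1 ∈ D) := by
  simp only [meetingPairs, mem_union, mem_product, mem_singleton]
  exact or_congr_right and_comm

theorem disjoint_meetingPairs (ha : a ∉ D) (hb : b ∉ D) (hab : a ≠ b) :
    Disjoint (meetingPairs D a) (meetingPairs D b) := by
  rw [disjoint_left]
  intro p hpa hpb
  rw [mem_meetingPairs] at hpa hpb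
  rcases hpa with ⟨h1, h2⟩ | ⟨h1, h2⟩ <;> rcases hpb with ⟨h3, h4⟩ | ⟨h3, h4⟩
  · exact hab (h1.symm.trans h3)
  · exact hb (h3 ▸ h2)
  · exact ha (h1 ▸ h4)
  · exact hab (h1.symm.trans h3)

theorem card_meetingPairs (ha : a ∉ D) : #(meetingPairs D a) = 2 * #D := by
  rw [meetingPairs, card_union_of_disjoint, card_product, card_product, card_singleton]
  · ring
  · simp only [disjoint_left, mem_product, mem_singleton]
    rintro p ⟨h1, -⟩ ⟨h2, -⟩
    exact ha (h1 ▸ h2)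

theorem meetingPairs_subset_offDiag (ha : a ∉ D) : meetingPairs D a ⊆ univ.offDiag := by
  intro p hp
  rw [mem_meetingPairs] at hp
  simp only [mem_offDiag, mem_univ, true_and]
  rintro hp12
  rcases hp with ⟨h1, h2⟩ | ⟨h1, h2⟩
  · exact ha (h1 ▸ hp12 ▸ h2)
  · exact ha (h1 ▸ hp12.symm ▸ h2)

theorem pairScheduler_real_meetingPairs (ha : a ∉ D) :
    (pairScheduler n).real (meetingPairs D a) = meetingProb n #D := by
  classical
  have hoff : {p : Fin n × Fin n | p.1 ≠ p.2} = (univ.offDiag : Finset (Fin n × Fin n)) := by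
    ext p
    simp
  rw [pairScheduler, measureReal_def, hoff, uniformOn_apply_finset,
    inter_eq_right.2 (meetingPairs_subset_offDiag ha), card_meetingPairs ha, offDiag_card,
    card_univ, Fintype.card_fin, ENNReal.toReal_div, ENNReal.toReal_natCast,
    ENNReal.toReal_natCast, Nat.cast_sub (Nat.le_mul_self n), meetingProb]
  push_cast
  ring

end Scheduler

section Arithmetic

open Real

theorem exists_one_le_mul_one_sub_pow {m p : ℝ} (hm : 1 ≤ m) (hp0 : 0 < p) (hp1 : p < 1) :
    ∃ K : ℕ, 1 ≤ m * (1 - p) ^ K ∧ (1 - p) * log m / p ≤ K + 1 := by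
  set K := ⌊(1 - p) * log m / p⌋₊
  have hq : 0 < 1 - p := sub_pos.2 hp1
  have hK : K * (p / (1 - p)) ≤ log m := by
    rw [mul_div_assoc', div_le_iff₀ hq, mul_comm (log m), ← le_div_iff₀ hp0]
    exact Nat.floor_le (by have := log_nonneg hm; positivity)
  refine ⟨K, ?_, (Nat.lt_floor_add_one _).le⟩
  have hlog_q : -(p / (1 - p)) ≤ log (1 - p) := by
    have := one_sub_inv_le_log_of_pos hq
    rwa [show 1 - (1 - p)⁻¹ = -(p / (1 - p)) by field_simp; ring] at this
  rw [← log_nonneg_iff (by positivity), log_mul (by positivity) (by positivity), log_pow]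
  nlinarith [(Nat.cast_nonneg K : (0 : ℝ) ≤ K)]

variable {n ρ : ℕ}

theorem meetingProb_nonneg : 0 ≤ meetingProb n ρ := by
  rw [meetingProb]
  rcases n with _ | n
  · simp
  · rw [Nat.cast_succ, add_sub_cancel_right]
    positivity

theorem meetingProb_pos (hρ : 1 ≤ ρ) (hρn : 2 * ρ < n) : 0 < meetingProb n ρ := by
  have hn : (2 : ℝ) ≤ n := by exact_mod_cast (by omega : 2 ≤ n)
  have hρ' : (1 : ℝ) ≤ ρ := by exact_mod_cast hρ
  exact div_pos (by positivity) (by nlinarith)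

theorem meetingProb_lt_one (hρ : 1 ≤ ρ) (hρn : 2 * ρ < n) : meetingProb n ρ < 1 := by
  have hρn' : 2 * (ρ : ℝ) + 1 ≤ n := by exact_mod_cast hρn
  have hρ' : (1 : ℝ) ≤ ρ := by exact_mod_cast hρ
  exact (div_lt_one (by nlinarith)).2 (by nlinarith)

theorem sq_mul_log_div_le_inv_meetingProb (hn : 4 ≤ n) (hρ : 1 ≤ ρ) (hlog : log n ≤ 3) :
    (n : ℝ) ^ 2 * log n / (8 * ρ) ≤ (meetingProb n ρ)⁻¹ := by
  have hn' : (4 : ℝ) ≤ n := by exact_mod_cast hn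
  have hρ' : (0 : ℝ) < ρ := by exact_mod_cast hρ
  rw [meetingProb, inv_div, div_le_div_iff₀ (by positivity) (by positivity)]
  have h : (n : ℝ) ^ 2 * log n ≤ 4 * (n * (n - 1)) := by
    nlinarith [mul_le_mul_of_nonneg_left hlog (by positivity : (0 : ℝ) ≤ n ^ 2)]
  nlinarith [mul_le_mul_of_nonneg_right h hρ'.le]

theorem sq_mul_log_div_le_of_three_lt_log (hρ : 1 ≤ ρ) (hρn : 2 * ρ < n)
    (hlog : 3 < log n) :
    (n : ℝ) ^ 2 * log n / (8 * ρ) ≤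
      (1 - meetingProb n ρ) * log (n - ρ) / meetingProb n ρ / 2 := by
  set x : ℝ := (n : ℝ)
  set r : ℝ := (ρ : ℝ)
  have hr : 0 < r := by simp only [r]; exact_mod_cast hρ
  have hrx : 2 * r + 1 ≤ x := by simp only [r, x]; exact_mod_cast hρn
  have hx8 : 8 ≤ x := by
    have := quadratic_le_exp_of_nonneg (x := 3) (by norm_num)
    have := exp_lt_exp.2 hlog
    rw [exp_log (by linarith)] at this
    linarith
  have hN : (x - 1) ^ 2 ≤ x * (x - 1) - 2 * r := by nlinarith
  have hlog_half : log x - log 2 ≤ log (x - r) := by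
    rw [← log_div (by linarith) two_ne_zero]
    exact log_le_log (by positivity) (by linarith)
  have hlog2 := log_two_lt_d9
  have hkey : x ^ 2 * log x ≤ 2 * (x * (x - 1) - 2 * r) * log (x - r) := by
    have h1 : 2 * (x - 1) ^ 2 * (log x - log 2) ≤ 2 * (x * (x - 1) - 2 * r) * log (x - r) := by
      gcongr
      · linarith
      · nlinarith
    nlinarith [mul_nonneg (by linarith : 0 ≤ log x - 3) (by nlinarith : 0 ≤ x ^ 2 - 4 * x + 2)]
  have hx0 : x ≠ 0 := by linarith
  have hx1 : x - 1 ≠ 0 := by linarith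
  rw [meetingProb, show (1 - 2 * r / (x * (x - 1))) * log (x - r) / (2 * r / (x * (x - 1))) / 2 =
      (x * (x - 1) - 2 * r) * log (x - r) / (4 * r) by field_simp; ring,
    div_le_div_iff₀ (by positivity) (by positivity)]
  nlinarith [mul_le_mul_of_nonneg_right hkey hr.le]

end Arithmetic

section Expectation

variable {n : ℕ} {D : Finset (Fin n)} {Ω : Type*} [MeasurableSpace Ω] {μ : Measure Ω}
  [IsProbabilityMeasure μ] {X : ℕ → Ω → Fin n × Fin n}

theorem pairScheduler_meetingPairs {a : Fin n} (ha : a ∉ D) :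
    pairScheduler n (meetingPairs D a) = ENNReal.ofReal (meetingProb n #D) := by
  rw [← ofReal_measureReal, pairScheduler_real_meetingPairs ha]

theorem pairScheduler_compl_meetingPairs [IsProbabilityMeasure (pairScheduler n)]
    {a : Fin n} (ha : a ∉ D) :
    pairScheduler n (meetingPairs D a : Set (Fin n × Fin n))ᶜ =
      ENNReal.ofReal (1 - meetingProb n #D) := by
  rw [prob_compl_eq_one_sub (meetingPairs D a).measurableSet, pairScheduler_meetingPairs ha,
    ← ENNReal.ofReal_one, ENNReal.ofReal_sub _ meetingProb_nonneg]

theorem pairScheduler_meetingPairs_ne_zero (hD : 1 ≤ #D) (hDn : 2 * #D < n) (a : Fin n)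
    (ha : a ∈ univ \ D) :
    pairScheduler n (meetingPairs D a) ≠ 0 := by
  rw [pairScheduler_meetingPairs (mem_sdiff.1 ha).2]
  exact (ENNReal.ofReal_pos.2 (meetingProb_pos hD hDn)).ne'

theorem lintegral_coverTime_meetingPairs_lt_top
    (hX : IsIIDSeq X μ (pairScheduler n)) (hD : 1 ≤ #D) (hDn : 2 * #D < n) :
    ∫⁻ ω, (coverTime X (univ \ D) (fun a => meetingPairs D a) ω : ℝ≥0∞) ∂μ < ∞ :=
  have := hX.isProbabilityMeasure
  hX.lintegral_coverTime_lt_top _ (fun _ => Finset.measurableSet _)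
    (pairScheduler_meetingPairs_ne_zero hD hDn)

theorem ofReal_inv_meetingProb_le_lintegral_coverTime
    (hX : IsIIDSeq X μ (pairScheduler n)) (hD : 1 ≤ #D) (hDn : 2 * #D < n) :
    ENNReal.ofReal (meetingProb n #D)⁻¹ ≤
      ∫⁻ ω, (coverTime X (univ \ D) (fun a => meetingPairs D a) ω : ℝ≥0∞) ∂μ := by
  have := hX.isProbabilityMeasure
  obtain ⟨a, ha⟩ : (univ \ D).Nonempty := by
    rw [← card_pos, card_sdiff_of_subset (subset_univ D), card_univ, Fintype.card_fin]
    omega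
  calc ENNReal.ofReal (meetingProb n #D)⁻¹
      = (pairScheduler n (meetingPairs D a))⁻¹ := by
        rw [pairScheduler_meetingPairs (mem_sdiff.1 ha).2,
          ENNReal.ofReal_inv_of_pos (meetingProb_pos hD hDn)]
    _ = ∫⁻ ω, (firstHit X (meetingPairs D a) ω : ℝ≥0∞) ∂μ :=
        (hX.lintegral_firstHit ((meetingPairs D a).measurableSet)
          (pairScheduler_meetingPairs_ne_zero hD hDn a ha)).symm
    _ ≤ _ := lintegral_mono fun ω =>
        Nat.cast_le.2 (le_sup (f := fun a => firstHit X (meetingPairs D a) ω) ha)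

theorem ofReal_le_lintegral_coverTime_meetingPairs
    (hX : IsIIDSeq X μ (pairScheduler n)) (hD : 1 ≤ #D) (hDn : 2 * #D < n) :
    ENNReal.ofReal ((1 - meetingProb n #D) * Real.log (n - #D) / meetingProb n #D / 2) ≤
      ∫⁻ ω, (coverTime X (univ \ D) (fun a => meetingPairs D a) ω : ℝ≥0∞) ∂μ := by
  have := hX.isProbabilityMeasure
  set p := meetingProb n #D
  have hp0 : 0 < p := meetingProb_pos hD hDn
  have hp1 : p < 1 := meetingProb_lt_one hD hDn
  have hm : 1 ≤ (n : ℝ) - #D := by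
    have : (2 * #D + 1 : ℝ) ≤ n := by exact_mod_cast hDn
    linarith
  obtain ⟨K, hK1, hK⟩ := exists_one_le_mul_one_sub_pow hm hp0 hp1
  have hcard : ((#(univ \ D) : ℕ) : ℝ) = n - #D := by
    rw [card_sdiff_of_subset (subset_univ D), card_univ, Fintype.card_fin,
      Nat.cast_sub (by omega : #D ≤ n)]
  have hsum : 1 ≤ ∑ a ∈ univ \ D,
      pairScheduler n (meetingPairs D a : Set (Fin n × Fin n))ᶜ ^ K := by
    rw [sum_congr rfl fun a ha => by rw [pairScheduler_compl_meetingPairs (mem_sdiff.1 ha).2],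
      sum_const, nsmul_eq_mul,
      ← ENNReal.ofReal_pow (sub_pos.2 hp1).le, ← ENNReal.ofReal_natCast,
      ← ENNReal.ofReal_mul (Nat.cast_nonneg _), hcard, ← ENNReal.ofReal_one]
    exact ENNReal.ofReal_le_ofReal hK1
  calc ENNReal.ofReal ((1 - p) * Real.log (n - #D) / p / 2)
      ≤ ENNReal.ofReal ((K + 1) / 2) :=
        ENNReal.ofReal_le_ofReal (div_le_div_of_nonneg_right hK two_pos.le)
    _ = ((K : ℝ≥0∞) + 1) / 2 := by
        rw [ENNReal.ofReal_div_of_pos two_pos]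
        norm_cast
    _ ≤ _ := hX.add_one_div_two_le_lintegral_coverTime _ (fun _ => Finset.measurableSet _)
        (pairScheduler_meetingPairs_ne_zero hD hDn)
        (fun a ha b hb hab => disjoint_coe.2
          (disjoint_meetingPairs (mem_sdiff.1 ha).2 (mem_sdiff.1 hb).2 hab)) hsum

end Expectation

/-- Under the uniform pairwise scheduler (`X k`, `k ≥ 1`, i.i.d. uniform on ordered
pairs of distinct agents of `Fin n`), let `D` be a set of `ρ` deputies with `1 ≤ ρ`
and `2ρ < n`, where `n ≥ 4`.  For every non-deputy `a`, let `τ a` be the first `k ≥ 1`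
such that the `k`-th interaction pairs `a` with a deputy (in either order), and let
`T = max_{a ∉ D} τ a`.  Then `E[T] ≥ n² · ln n / (8ρ)`. -/
theorem stmt_11 (n : ℕ) (hn : 4 ≤ n)
    {Ω : Type*} [MeasurableSpace Ω] (μ : Measure Ω) [IsProbabilityMeasure μ]
    (X : ℕ → Ω → Fin n × Fin n) (hmeas : ∀ k, Measurable (X k))
    (hindep : iIndepFun (fun k => X (k + 1)) μ)
    (hunif : ∀ k, 1 ≤ k →
      Measure.map (X k) μ = uniformOn {p : Fin n × Fin n | p.1 ≠ p.2})
    (D : Finset (Fin n)) (ρ : ℕ) (hD : D.card = ρ) (hρ1 : 1 ≤ ρ) (hρn : 2 * ρ < n)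
    (τ : Fin n → Ω → ℕ)
    (hτ : ∀ a ∉ D, ∀ ω, τ a ω = sInf {k | 1 ≤ k ∧
      (((X k ω).1 = a ∧ (X k ω).2 ∈ D) ∨ ((X k ω).2 = a ∧ (X k ω).1 ∈ D))})
    (T : Ω → ℕ) (hT : ∀ ω, T ω = (Finset.univ \ D).sup fun a => τ a ω) :
    (n : ℝ) ^ 2 * Real.log n / (8 * ρ) ≤ ∫ ω, (T ω : ℝ) ∂μ := by
  subst hD
  have hX : IsIIDSeq X μ (pairScheduler n) := ⟨hmeas, hindep, hunif⟩
  have hT_eq : T = coverTime X (univ \ D) fun a => meetingPairs D a := by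
    funext ω
    refine (hT ω).trans (sup_congr rfl fun a ha => ?_)
    rw [hτ a (mem_sdiff.1 ha).2 ω]
    simp only [firstHit, mem_coe, mem_meetingPairs]
  subst hT_eq
  rw [integral_natCast_eq_toReal_lintegral (measurable_coverTime _ hmeas
      (fun _ => Finset.measurableSet _)),
    ← ENNReal.ofReal_le_iff_le_toReal (lintegral_coverTime_meetingPairs_lt_top hX hρ1 hρn).ne]
  rcases le_or_gt (Real.log n) 3 with hsmall | hlarge
  · exact (ENNReal.ofReal_le_ofReal (sq_mul_log_div_le_inv_meetingProb hn hρ1 hsmall)).trans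
      (ofReal_inv_meetingProb_le_lintegral_coverTime hX hρ1 hρn)
  · exact (ENNReal.ofReal_le_ofReal (sq_mul_log_div_le_of_three_lt_log hρ1 hρn hlarge)).trans
      (ofReal_le_lintegral_coverTime_meetingPairs hX hρ1 hρn)
end

section
/- Let (Ω, F, μ) be a probability space with a filtration (F_k)_{k∈ℕ}, let T : Ω → ℕ be an integrable stopping time with respect to (F_k), and let m > 0 be a real number. Suppose that for every k ∈ ℕ, almost surely the conditional expectation E[(T − k)⁺ | F_k] is at most m, where (x)⁺ denotes max(x, 0). Then for every j ∈ ℕ, μ({ω : T(ω) > j · ⌈2m⌉}) ≤ (1/2)^j. -/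
open MeasureTheory ProbabilityTheory

/-!
Write `c = ⌈2m⌉`. On the `ℱ k`-measurable event `{T > k}` the residual `(T - k)⁺` has conditional
mean at most `m`, while on `{T > k + c}` it is at least `2m`; a conditional Markov inequality
therefore gives `P(T > k + c) ≤ P(T > k) / 2` for every `k`, and iterating from `k = 0` yields
the geometric bound.
-/

section ConditionalMarkov

variable {Ω : Type*} {m m0 : MeasurableSpace Ω} {μ : Measure Ω} [IsFiniteMeasure μ]

lemma mul_measureReal_le_of_ae_condExp_le (hm : m ≤ m0) {f : Ω → ℝ} (hf : Integrable f μ)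
    (hf0 : 0 ≤ f) {a b : ℝ} (hcond : ∀ᵐ ω ∂μ, (μ[f | m]) ω ≤ a) {A B : Set Ω}
    (hA : MeasurableSet[m] A) (hB : MeasurableSet B) (hBA : B ⊆ A) (hb : ∀ ω ∈ B, b ≤ f ω) :
    b * μ.real B ≤ a * μ.real A :=
  calc b * μ.real B
      ≤ ∫ ω in B, f ω ∂μ :=
        setIntegral_ge_of_const_le_real hB (measure_ne_top _ _) hb hf.integrableOn
    _ ≤ ∫ ω in A, f ω ∂μ :=
        setIntegral_mono_set hf.integrableOn (ae_of_all _ hf0) hBA.eventuallyLE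
    _ = ∫ ω in A, (μ[f | m]) ω ∂μ := (setIntegral_condExp hm hf hA).symm
    _ ≤ ∫ _ in A, a ∂μ :=
        setIntegral_mono_ae integrable_condExp.integrableOn integrableOn_const hcond
    _ = a * μ.real A := by rw [setIntegral_const, smul_eq_mul, mul_comm]

end ConditionalMarkov

lemma le_pow_mul_of_forall_add_le_mul {M : Type*} [Monoid M] [Preorder M] [MulLeftMono M]
    {u : ℕ → M} {c : ℕ} {r : M} (h : ∀ k, u (k + c) ≤ r * u k) (j : ℕ) :
    u (j * c) ≤ r ^ j * u 0 := by
  induction j with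
  | zero => simp
  | succ j ih =>
    calc u ((j + 1) * c) = u (j * c + c) := by rw [Nat.succ_mul]
      _ ≤ r * u (j * c) := h _
      _ ≤ r * (r ^ j * u 0) := mul_le_mul_right ih r
      _ = r ^ (j + 1) * u 0 := by rw [← mul_assoc, pow_succ']

section StoppingTime

variable {Ω : Type*} {m0 : MeasurableSpace Ω} {μ : Measure Ω} [IsFiniteMeasure μ]
  {ℱ : Filtration ℕ m0} {T : Ω → ℕ}

lemma measurableSet_lt_of_isStoppingTime (hT : IsStoppingTime ℱ (fun ω => (T ω : WithTop ℕ)))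
    (k : ℕ) : MeasurableSet[ℱ k] {ω | k < T ω} := by
  simpa using hT.measurableSet_gt k

lemma measure_lt_add_le_half_measure_lt (hT : IsStoppingTime ℱ (fun ω => (T ω : WithTop ℕ)))
    (hint : Integrable (fun ω => (T ω : ℝ)) μ) {m : ℝ} (hm : 0 < m) {k c : ℕ}
    (hcond : ∀ᵐ ω ∂μ, (μ[fun ω' => max ((T ω' : ℝ) - k) 0 | ℱ k]) ω ≤ m) (hc : 2 * m ≤ c) :
    μ {ω | k + c < T ω} ≤ 1 / 2 * μ {ω | k < T ω} := by
  have hresidual (ω : Ω) (hω : k + c < T ω) : 2 * m ≤ max ((T ω : ℝ) - k) 0 := by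
    have : (k : ℝ) + c < T ω := by exact_mod_cast hω
    exact le_max_of_le_left (by linarith)
  have hmarkov : 2 * m * μ.real {ω | k + c < T ω} ≤ m * μ.real {ω | k < T ω} :=
    mul_measureReal_le_of_ae_condExp_le (ℱ.le k) (hint.sub (integrable_const (k : ℝ))).pos_part
      (fun ω => le_max_right _ _) hcond (measurableSet_lt_of_isStoppingTime hT k)
      (ℱ.le _ _ (measurableSet_lt_of_isStoppingTime hT (k + c)))
      (fun ω (hω : k + c < T ω) => (Nat.le_add_right k c).trans_lt hω) hresidual
  have hreal : μ.real {ω | k + c < T ω} ≤ 1 / 2 * μ.real {ω | k < T ω} := by nlinarith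
  rw [← ENNReal.toReal_le_toReal (measure_ne_top _ _)
    (ENNReal.mul_ne_top (by simp) (measure_ne_top _ _)), ENNReal.toReal_mul]
  simpa [measureReal_def] using hreal

end StoppingTime

/-- Geometric tail bound from a uniform bound on the residual conditional expectation:
if `T` is an integrable `ℕ`-valued stopping time for a filtration `(ℱ k)` on a
probability space and for every `k` the conditional expectation
`E[(T - k)⁺ | ℱ k] ≤ m` almost surely, then `P(T > j·⌈2m⌉) ≤ (1/2)^j` for all `j`. -/
theorem stmt_12 {Ω : Type*} [m0 : MeasurableSpace Ω]
    (μ : Measure Ω) [IsProbabilityMeasure μ]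
    (ℱ : Filtration ℕ m0) (T : Ω → ℕ)
    (hstop : IsStoppingTime ℱ (fun ω => (T ω : WithTop ℕ)))
    (hint : Integrable (fun ω => (T ω : ℝ)) μ)
    (m : ℝ) (hm : 0 < m)
    (hcond : ∀ k : ℕ, ∀ᵐ ω ∂μ,
      (μ[fun ω' => max ((T ω' : ℝ) - k) 0 | ℱ k]) ω ≤ m) :
    ∀ j : ℕ, μ {ω | j * ⌈2 * m⌉₊ < T ω} ≤ (1 / 2 : ENNReal) ^ j := by
  intro j
  have hhalf (k : ℕ) : μ {ω | k + ⌈2 * m⌉₊ < T ω} ≤ 1 / 2 * μ {ω | k < T ω} :=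
    measure_lt_add_le_half_measure_lt hstop hint hm (hcond k) (Nat.le_ceil _)
  calc μ {ω | j * ⌈2 * m⌉₊ < T ω}
      ≤ (1 / 2) ^ j * μ {ω | 0 < T ω} :=
        le_pow_mul_of_forall_add_le_mul (u := fun k => μ {ω | k < T ω}) hhalf j
    _ ≤ (1 / 2) ^ j := mul_le_of_le_one_right' prob_le_one
end
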